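/- Exactly 20 of the 28 non-adjacent unordered vertex pairs of G_Q are not a diagonal of any 4-belt of G_Q. -/

import Mathlib

/-- Edge list of the facet-intersection graph `G_Q` of the polytope `𝒬`
(vertices: a=0, b=1, c=2, d=3, e=4, f=5, g=6, h=7, i=8, j=9, k=10). -/
def qEdgeList : List (Fin 11 × Fin 11) :=
  [(0,1),(0,2),(0,3),(0,4),(0,5),(1,2),(1,5),(1,6),(2,3),(2,6),(2,7),(2,8),
   (3,4),(3,8),(3,9),(4,5),(4,9),(5,6),(5,9),(5,10),(6,7),(6,10),(7,8),(7,9),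
   (7,10),(8,9),(9,10)]

/-- The facet-intersection graph `G_Q` of the polytope `𝒬`. -/
def G_Q : SimpleGraph (Fin 11) where
  Adj u v := (u, v) ∈ qEdgeList ∨ (v, u) ∈ qEdgeList
  symm := ⟨fun u v h => h.symm⟩
  loopless := ⟨by intro v; fin_cases v <;> decide⟩

instance : DecidableRel G_Q.Adj :=
  fun u v => inferInstanceAs (Decidable ((u, v) ∈ qEdgeList ∨ (v, u) ∈ qEdgeList))

/-- A 4-belt of a simple graph `G` is a 4-element vertex set that can be written as
`{w, x, y, z}` where `wx`, `xy`, `yz`, `zw` are edges of `G` while `wy`, `xz` are not. -/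
def IsFourBelt {V : Type*} (G : SimpleGraph V) (B : Set V) : Prop :=
  ∃ w x y z : V, B = {w, x, y, z} ∧ B.ncard = 4 ∧
    G.Adj w x ∧ G.Adj x y ∧ G.Adj y z ∧ G.Adj z w ∧ ¬ G.Adj w y ∧ ¬ G.Adj x z

/-- The pair `{u, v}` is a diagonal of the 4-belt `B` of `G`. -/
def IsDiagonalOfBelt {V : Type*} (G : SimpleGraph V) (u v : V) (B : Set V) : Prop :=
  ∃ w x y z : V, B = {w, x, y, z} ∧ B.ncard = 4 ∧
    G.Adj w x ∧ G.Adj x y ∧ G.Adj y z ∧ G.Adj z w ∧ ¬ G.Adj w y ∧ ¬ G.Adj x z ∧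
    (({u, v} : Set V) = {w, y} ∨ ({u, v} : Set V) = {x, z})

/-- The pair `{u, v}` is a diagonal of some 4-belt of `G`. -/
def IsBeltDiagonal {V : Type*} (G : SimpleGraph V) (u v : V) : Prop :=
  ∃ B : Set V, IsDiagonalOfBelt G u v B

namespace Set

variable {V : Type*}

lemma ne_and_ne_of_ncard_eq_four {w x y z : V} (h : ({w, x, y, z} : Set V).ncard = 4) :
    w ≠ y ∧ x ≠ z := by
  have ncard_le_three : ∀ a b c : V, ({a, b, c} : Set V).ncard ≤ 3 := fun a b c =>
    calc ({a, b, c} : Set V).ncard ≤ ({b, c} : Set V).ncard + 1 := ncard_insert_le _ _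
      _ ≤ ({c} : Set V).ncard + 1 + 1 := by gcongr; exact ncard_insert_le _ _
      _ = 3 := by rw [ncard_singleton]
  constructor
  · rintro rfl
    have := ncard_le_three x w z
    rw [show ({w, x, w, z} : Set V) = {x, w, z} by
      ext; simp only [mem_insert_iff, mem_singleton_iff]; tauto] at h
    omega
  · rintro rfl
    have := ncard_le_three w x y
    rw [show ({w, x, y, x} : Set V) = {w, x, y} by
      ext; simp only [mem_insert_iff, mem_singleton_iff]; tauto] at h
    omega

lemma ncard_eq_four_of_pairwise_ne {w x y z : V} (hwx : w ≠ x) (hwy : w ≠ y) (hwz : w ≠ z)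
    (hxy : x ≠ y) (hxz : x ≠ z) (hyz : y ≠ z) : ({w, x, y, z} : Set V).ncard = 4 := by
  rw [ncard_insert_of_notMem (by simp [*]), ncard_insert_of_notMem (by simp [*]),
    ncard_pair hyz]

lemma ncard_setOf_pair_eq [Fintype V] [DecidableEq V] (P : V → V → Prop) [DecidableRel P] :
    {p : Set V | ∃ u v, P u v ∧ p = {u, v}}.ncard =
      ((Finset.univ.filter fun q : V × V => P q.1 q.2).image
        fun q => ({q.1, q.2} : Finset V)).card := by
  rw [← ncard_coe_finset, ← ncard_image_of_injective _ Finset.coe_injective]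
  congr 1
  ext p
  simp [eq_comm]

end Set

namespace SimpleGraph

variable {V : Type*} {G : SimpleGraph V}

lemma not_isClique_commonNeighbors_of_cycle {w x y z : V} (hwx : G.Adj w x) (hxy : G.Adj x y)
    (hyz : G.Adj y z) (hzw : G.Adj z w) (hxz_ne : x ≠ z) (hxz : ¬G.Adj x z) :
    ¬G.IsClique (G.commonNeighbors w y) := fun hclique =>
  hxz (hclique (G.mem_commonNeighbors.2 ⟨hwx, hxy.symm⟩)
    (G.mem_commonNeighbors.2 ⟨hzw.symm, hyz⟩) hxz_ne)

/-- Two non-adjacent common neighbours `x`, `z` of `u`, `v` are exactly what makes `u x v z`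
a 4-belt. -/
theorem isBeltDiagonal_iff {u v : V} :
    IsBeltDiagonal G u v ↔ u ≠ v ∧ ¬G.Adj u v ∧ ¬G.IsClique (G.commonNeighbors u v) := by
  constructor
  · rintro ⟨B, w, x, y, z, rfl, h4, hwx, hxy, hyz, hzw, hwy, hxz, hdiag⟩
    have of_pair : ∀ {a b : V}, ({u, v} : Set V) = {a, b} →
        a ≠ b ∧ ¬G.Adj a b ∧ ¬G.IsClique (G.commonNeighbors a b) →
        u ≠ v ∧ ¬G.Adj u v ∧ ¬G.IsClique (G.commonNeighbors u v) := by
      intro a b hab h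
      rcases Set.pair_eq_pair_iff.1 hab with ⟨rfl, rfl⟩ | ⟨rfl, rfl⟩
      · exact h
      · rwa [ne_comm, G.adj_comm, commonNeighbors_symm]
    obtain ⟨hwy_ne, hxz_ne⟩ := Set.ne_and_ne_of_ncard_eq_four h4
    rcases hdiag with hdiag | hdiag
    · exact of_pair hdiag ⟨hwy_ne, hwy,
        not_isClique_commonNeighbors_of_cycle hwx hxy hyz hzw hxz_ne hxz⟩
    · exact of_pair hdiag ⟨hxz_ne, hxz,
        not_isClique_commonNeighbors_of_cycle hxy hyz hzw hwx hwy_ne.symm (fun h => hwy h.symm)⟩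
  · rintro ⟨huv, hnadj, hclique⟩
    simp only [IsClique, Set.Pairwise, mem_commonNeighbors, not_forall] at hclique
    obtain ⟨x, ⟨hux, hvx⟩, z, ⟨huz, hvz⟩, hxz_ne, hxz⟩ := hclique
    have h4 := Set.ncard_eq_four_of_pairwise_ne hux.ne huv huz.ne hvx.ne.symm hxz_ne hvz.ne
    exact ⟨_, u, x, v, z, rfl, h4, hux, hvx.symm, hvz, huz.symm, hnadj, hxz, Or.inl rfl⟩

end SimpleGraph

/-- Exactly 20 of the 28 non-adjacent unordered vertex pairs of `G_Q` are not a
diagonal of any 4-belt of `G_Q`. -/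
theorem stmt_9 :
    {p : Set (Fin 11) | ∃ u v : Fin 11, u ≠ v ∧ ¬ G_Q.Adj u v ∧
        ¬ IsBeltDiagonal G_Q u v ∧ p = {u, v}}.ncard = 20 := by
  simp only [SimpleGraph.isBeltDiagonal_iff, SimpleGraph.IsClique, Set.Pairwise,
    SimpleGraph.mem_commonNeighbors, ← and_assoc]
  rw [Set.ncard_setOf_pair_eq]
  decide
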